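/- Let p, q ∈ (0,1) be real numbers with p + q = 1, let s ≥ p be a real number, let x > 0 be real, and let d_1, …, d_n and t_1, …, t_n be nonnegative reals with d_i ≤ x for every i. Then ∑_{i=1}^n d_i^s · t_i^q ≤ x^{s−p} · (∑_{i=1}^n d_i)^p · (∑_{i=1}^n t_i)^q. -/

import Mathlib

/-!
Since `d i ≤ x` and `s - p ≥ 0`, each factor `d i ^ s = d i ^ (s - p) * d i ^ p` is at most
`x ^ (s - p) * d i ^ p`; what remains, `∑ d i ^ p * t i ^ q ≤ (∑ d i) ^ p * (∑ t i) ^ q`, is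
Hölder's inequality with the conjugate exponents `1 / p` and `1 / q`.
-/

open Finset Real

theorem Real.sum_rpow_mul_rpow_le {ι : Type*} (s : Finset ι) {f g : ι → ℝ} {p q : ℝ}
    (hp : 0 < p) (hq : 0 < q) (hpq : p + q = 1) (hf : ∀ i ∈ s, 0 ≤ f i)
    (hg : ∀ i ∈ s, 0 ≤ g i) :
    ∑ i ∈ s, f i ^ p * g i ^ q ≤ (∑ i ∈ s, f i) ^ p * (∑ i ∈ s, g i) ^ q := by
  have hconj : (1 / p).HolderConjugate (1 / q) :=
    ⟨by simpa only [one_div, inv_inv, inv_one] using hpq, by positivity, by positivity⟩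
  have rpow_rpow_inv {a r : ℝ} (ha : 0 ≤ a) (hr : 0 < r) : (a ^ r) ^ (1 / r) = a := by
    rw [← rpow_mul ha, mul_one_div_cancel hr.ne', rpow_one]
  have holder := inner_le_Lp_mul_Lq_of_nonneg s hconj
    (fun i hi => rpow_nonneg (hf i hi) p) (fun i hi => rpow_nonneg (hg i hi) q)
  simp only [one_div_one_div] at holder
  rwa [sum_congr rfl fun i hi => rpow_rpow_inv (hf i hi) hp,
    sum_congr rfl fun i hi => rpow_rpow_inv (hg i hi) hq] at holder

theorem Real.rpow_le_rpow_sub_mul_rpow {d x p s : ℝ} (hd : 0 ≤ d) (hdx : d ≤ x) (hp : 0 ≤ p)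
    (hps : p ≤ s) : d ^ s ≤ x ^ (s - p) * d ^ p := by
  calc d ^ s = d ^ (s - p) * d ^ p := by
        rw [← rpow_add_of_nonneg hd (sub_nonneg.2 hps) hp, sub_add_cancel]
    _ ≤ x ^ (s - p) * d ^ p := by gcongr

theorem sum_rpow_le_of_le (p q : ℝ) (hp : 0 < p) (hq : 0 < q)
    (hpq : p + q = 1) (s : ℝ) (hs : p ≤ s) (x : ℝ) (hx : 0 < x)
    (n : ℕ) (d t : Fin n → ℝ)
    (hd : ∀ i, 0 ≤ d i) (ht : ∀ i, 0 ≤ t i) (hdx : ∀ i, d i ≤ x) :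
    ∑ i, d i ^ s * t i ^ q ≤ x ^ (s - p) * (∑ i, d i) ^ p * (∑ i, t i) ^ q := by
  calc ∑ i, d i ^ s * t i ^ q ≤ ∑ i, x ^ (s - p) * (d i ^ p * t i ^ q) :=
        sum_le_sum fun i _ => by
          rw [← mul_assoc]
          exact mul_le_mul_of_nonneg_right (rpow_le_rpow_sub_mul_rpow (hd i) (hdx i) hp.le hs)
            (rpow_nonneg (ht i) q)
    _ = x ^ (s - p) * ∑ i, d i ^ p * t i ^ q := (mul_sum _ _ _).symm
    _ ≤ x ^ (s - p) * ((∑ i, d i) ^ p * (∑ i, t i) ^ q) := by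
        gcongr
        exact sum_rpow_mul_rpow_le univ hp hq hpq (fun i _ => hd i) fun i _ => ht i
    _ = x ^ (s - p) * (∑ i, d i) ^ p * (∑ i, t i) ^ q := (mul_assoc _ _ _).symm
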